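/- Under the same hypotheses (Winfree model solution with dispersion bounded by D on [0,t*]), each pairwise difference satisfies |d/dt δ_{i,j}(t)| ≤ 2γ + Cκ D² + C̃ κ D for all t ∈ [0,t*], where C = ‖P‖_∞‖R''‖_∞ + ‖P'‖_∞‖R'‖_∞ and C̃ = ‖P'‖_∞‖R‖_∞ + ‖P‖_∞‖R'‖_∞. -/

import Mathlib

/-!
Subtracting the equations for `xᵢ` and `xⱼ` gives
`δᵢⱼ' = (ωᵢ - ωⱼ) - κ · (mean of P(xₖ)) · (R(xᵢ) - R(xⱼ))`.
The mean is bounded by `‖P‖∞` and, by the mean value theorem, `|R(xᵢ) - R(xⱼ)| ≤ ‖R'‖∞ D`,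
so `|δᵢⱼ'| ≤ 2γ + κ ‖P‖∞ ‖R'‖∞ D`, which is at most the claimed bound. The sup norms are
finite because continuous periodic functions are bounded.
-/

open Real

theorem Function.Periodic.bddAbove_range_abs {f : ℝ → ℝ} {c : ℝ} (hp : Function.Periodic f c)
    (hc : c ≠ 0) (hf : Continuous f) : BddAbove (Set.range fun y => |f y|) := by
  have h := ((hp.compact_of_continuous hc hf).image continuous_abs).bddAbove
  rwa [← Set.range_comp] at h

theorem Function.Periodic.deriv {𝕜 F : Type*} [NontriviallyNormedField 𝕜] [NormedAddCommGroup F]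
    [NormedSpace 𝕜 F] {f : 𝕜 → F} {c : 𝕜} (hp : Function.Periodic f c) :
    Function.Periodic (_root_.deriv f) c := fun y => by
  rw [← deriv_comp_add_const, funext hp]

theorem abs_sub_le_iSup_abs_deriv_mul {f : ℝ → ℝ} (hf : Differentiable ℝ f)
    (hbdd : BddAbove (Set.range fun y => |deriv f y|)) (a b : ℝ) :
    |f a - f b| ≤ (⨆ y, |deriv f y|) * |a - b| := by
  simpa only [Real.norm_eq_abs] using
    convex_univ.norm_image_sub_le_of_norm_deriv_le (fun y _ => hf y) (fun y _ => le_ciSup hbdd y)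
      (Set.mem_univ b) (Set.mem_univ a)

theorem abs_sum_div_card_le {ι : Type*} [Fintype ι] [Nonempty ι] {a : ι → ℝ} {M : ℝ}
    (ha : ∀ k, |a k| ≤ M) : |(∑ k, a k) / Fintype.card ι| ≤ M := by
  have hcard : (0 : ℝ) < Fintype.card ι := by exact_mod_cast Fintype.card_pos
  rw [abs_div, Nat.abs_cast, div_le_iff₀ hcard, mul_comm]
  calc |∑ k, a k| ≤ ∑ k, |a k| := Finset.abs_sum_le_sum_abs _ _
    _ ≤ ∑ _k : ι, M := Finset.sum_le_sum fun k _ => ha k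
    _ = Fintype.card ι * M := by simp

theorem abs_mul_mean_mul_sub_le {ι : Type*} [Fintype ι] [Nonempty ι] {P R : ℝ → ℝ}
    (hP : BddAbove (Set.range fun y => |P y|)) (hR : Differentiable ℝ R)
    (hR' : BddAbove (Set.range fun y => |deriv R y|)) {κ : ℝ} (hκ : 0 ≤ κ) (y : ι → ℝ)
    (a b : ℝ) :
    |κ * ((∑ k, P (y k)) / Fintype.card ι) * (R a - R b)|
      ≤ κ * ((⨆ z, |P z|) * (⨆ z, |deriv R z|)) * |a - b| := by
  have hmean := abs_sum_div_card_le fun k => le_ciSup hP (y k)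
  have hRab := abs_sub_le_iSup_abs_deriv_mul hR hR' a b
  rw [abs_mul, abs_mul, abs_of_nonneg hκ, mul_assoc, mul_assoc, mul_assoc]
  gcongr
  exact (abs_nonneg _).trans hmean

theorem winfree_hasDerivAt_sub {N : ℕ} {P R : ℝ → ℝ} {κ : ℝ} {ω : Fin N → ℝ}
    {x : Fin N → ℝ → ℝ}
    (hode : ∀ i t, HasDerivAt (x i) (ω i - (κ / N) * ∑ j, P (x j t) * R (x i t)) t)
    (i j : Fin N) (t : ℝ) :
    HasDerivAt (fun u => x i u - x j u)
      (ω i - ω j - κ * ((∑ k, P (x k t)) / N) * (R (x i t) - R (x j t))) t := by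
  refine ((hode i t).sub (hode j t)).congr_deriv ?_
  rw [← Finset.sum_mul, ← Finset.sum_mul]
  ring

theorem stmt4_general (N : ℕ) (P R : ℝ → ℝ)
    (hP : ContDiff ℝ 2 P) (hR : ContDiff ℝ 2 R)
    (hPper : Function.Periodic P (2 * π)) (hRper : Function.Periodic R (2 * π))
    (κ γ D tstar : ℝ) (hκ : 0 < κ)
    (ω : Fin N → ℝ) (hω : ∀ i, ω i ∈ Set.Ioo (1 - γ) (1 + γ))
    (x : Fin N → ℝ → ℝ)
    (hode : ∀ i t, HasDerivAt (x i)
      (ω i - (κ / N) * ∑ j, P (x j t) * R (x i t)) t)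
    (hdisp : ∀ t ∈ Set.Icc (0:ℝ) tstar, ∀ i j, |x i t - x j t| < D)
    (C Ct : ℝ)
    (hC : C = (⨆ y : ℝ, |P y|) * (⨆ y : ℝ, |deriv (deriv R) y|)
            + (⨆ y : ℝ, |deriv P y|) * (⨆ y : ℝ, |deriv R y|))
    (hCt : Ct = (⨆ y : ℝ, |deriv P y|) * (⨆ y : ℝ, |R y|)
            + (⨆ y : ℝ, |P y|) * (⨆ y : ℝ, |deriv R y|)) :
    ∀ i j, ∀ t ∈ Set.Icc (0:ℝ) tstar,
      |deriv (fun u => x i u - x j u) t| ≤ 2 * γ + C * κ * D ^ 2 + Ct * κ * D := by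
  intro i j t ht
  have : Nonempty (Fin N) := ⟨i⟩
  have hsup : ∀ f : ℝ → ℝ, 0 ≤ ⨆ y, |f y| := fun f => Real.iSup_nonneg fun _ => abs_nonneg _
  have h2π : 2 * π ≠ 0 := by positivity
  have hcoupling := abs_mul_mean_mul_sub_le (hPper.bddAbove_range_abs h2π hP.continuous)
    (hR.differentiable two_ne_zero) (hRper.deriv.bddAbove_range_abs h2π
      (hR.continuous_deriv one_le_two)) hκ.le (fun k => x k t) (x i t) (x j t)
  rw [Fintype.card_fin] at hcoupling
  have hω : |ω i - ω j| ≤ 2 * γ := by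
    simpa [two_mul, Real.dist_eq] using Real.dist_le_of_mem_Icc
      (Set.Ioo_subset_Icc_self (hω i)) (Set.Ioo_subset_Icc_self (hω j))
  have hδ : |x i t - x j t| ≤ D := (hdisp t ht i j).le
  have hCt : (⨆ y, |P y|) * (⨆ y, |deriv R y|) ≤ Ct := by
    rw [hCt]; exact le_add_of_nonneg_left (mul_nonneg (hsup _) (hsup _))
  have hC : 0 ≤ C := by
    rw [hC]; exact add_nonneg (mul_nonneg (hsup _) (hsup _)) (mul_nonneg (hsup _) (hsup _))
  rw [(winfree_hasDerivAt_sub hode i j t).deriv]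
  calc _ ≤ |ω i - ω j| + |κ * ((∑ k, P (x k t)) / N) * (R (x i t) - R (x j t))| := abs_sub _ _
    _ ≤ 2 * γ + κ * Ct * D := by
        have hCt0 : 0 ≤ Ct := (mul_nonneg (hsup _) (hsup _)).trans hCt
        grw [hω, hcoupling, hCt, hδ]
    _ ≤ 2 * γ + C * κ * D ^ 2 + Ct * κ * D := by
        nlinarith [mul_nonneg (mul_nonneg hC hκ.le) (sq_nonneg D)]

theorem stmt4 (N : ℕ) (hN : 0 < N) (P R : ℝ → ℝ)
    (hP : ContDiff ℝ 2 P) (hR : ContDiff ℝ 2 R)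
    (hPper : Function.Periodic P (2 * π)) (hRper : Function.Periodic R (2 * π))
    (κ γ D tstar : ℝ) (hκ : 0 < κ) (hγ : γ ∈ Set.Ioo (0:ℝ) 1) (hD : 0 < D)
    (ω : Fin N → ℝ) (hω : ∀ i, ω i ∈ Set.Ioo (1 - γ) (1 + γ))
    (x : Fin N → ℝ → ℝ)
    (hode : ∀ i t, HasDerivAt (x i)
      (ω i - (κ / N) * ∑ j, P (x j t) * R (x i t)) t)
    (hdisp : ∀ t ∈ Set.Icc (0:ℝ) tstar, ∀ i j, |x i t - x j t| < D)
    (C Ct : ℝ)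
    (hC : C = (⨆ y : ℝ, |P y|) * (⨆ y : ℝ, |deriv (deriv R) y|)
            + (⨆ y : ℝ, |deriv P y|) * (⨆ y : ℝ, |deriv R y|))
    (hCt : Ct = (⨆ y : ℝ, |deriv P y|) * (⨆ y : ℝ, |R y|)
            + (⨆ y : ℝ, |P y|) * (⨆ y : ℝ, |deriv R y|)) :
    ∀ i j, ∀ t ∈ Set.Icc (0:ℝ) tstar,
      |deriv (fun u => x i u - x j u) t| ≤ 2 * γ + C * κ * D ^ 2 + Ct * κ * D :=
  stmt4_general N P R hP hR hPper hRper κ γ D tstar hκ ω hω x hode hdisp C Ct hC hCt
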